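/- For all τ in the complex upper half-plane ℍ and all z ∈ ℂ: θ_{0,0}(τ/2, z/2) = θ_{0,0}(2τ, z) + θ_{1,0}(2τ, z), and θ_{0,1}(τ/2, z/2) = θ_{0,0}(2τ, z) − θ_{1,0}(2τ, z). -/
import Mathlib


/-- The classical theta function
`θ_{μ,ν}(τ,z) = ∑_{n∈ℤ} e^{πinν} e^{πiτ(n+μ/2)²} e^{2πiz(n+μ/2)}`. -/
noncomputable def theta (μ ν : ℚ) (τ z : ℂ) : ℂ :=
  ∑' n : ℤ, Complex.exp (Real.pi * Complex.I * n * ν) *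
    Complex.exp (Real.pi * Complex.I * τ * (n + μ / 2) ^ 2) *
    Complex.exp (2 * Real.pi * Complex.I * z * (n + μ / 2))

private lemma tsum_int_even_add_odd' {f : ℤ → ℂ} (hf : Summable f) :
    ∑' n : ℤ, f n = (∑' m : ℤ, f (2 * m)) + ∑' m : ℤ, f (2 * m + 1) := by
  have h2 : Function.Injective (fun m : ℤ => 2 * m) := by
    intro a b h; simp only at h; omega
  have h3 : Function.Injective (fun m : ℤ => 2 * m + 1) := by
    intro a b h; simp only at h; omega
  have he : Summable (fun m : ℤ => f (2 * m)) := hf.comp_injective h2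
  have ho : Summable (fun m : ℤ => f (2 * m + 1)) := hf.comp_injective h3
  have hcompl : (Set.range fun m : ℤ => 2 * m + 1) = (Set.range fun m : ℤ => 2 * m)ᶜ := by
    ext n
    simp only [Set.mem_range, Set.mem_compl_iff, not_exists]
    constructor
    · rintro ⟨m, rfl⟩ k; omega
    · intro h; have := h (n / 2); exact ⟨(n - 1) / 2, by omega⟩
  have hE : HasSum (fun x : Set.range (fun m : ℤ => 2 * m) => f x)
      (∑' m : ℤ, f (2 * m)) := h2.hasSum_range_iff.2 he.hasSum
  have hO : HasSum (fun x : ((Set.range (fun m : ℤ => 2 * m))ᶜ : Set ℤ) => f x)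
      (∑' m : ℤ, f (2 * m + 1)) := by
    rw [← hcompl]
    exact h3.hasSum_range_iff.2 ho.hasSum
  exact (hE.add_compl hO).tsum_eq

private lemma summable_theta_term' (τ z w : ℂ) (hτ : 0 < τ.im) :
    Summable (fun n : ℤ => Complex.exp (Real.pi * Complex.I * n * w) *
      Complex.exp (Real.pi * Complex.I * (τ / 2) * n ^ 2) *
      Complex.exp (2 * Real.pi * Complex.I * (z / 2) * n)) := by
  have him : 0 < (τ / 2).im := by
    simp only [Complex.div_im]
    norm_num
    positivity
  have h : (fun n : ℤ => Complex.exp (Real.pi * Complex.I * n * w) *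
      Complex.exp (Real.pi * Complex.I * (τ / 2) * n ^ 2) *
      Complex.exp (2 * Real.pi * Complex.I * (z / 2) * n))
      = fun n : ℤ => jacobiTheta₂_term n (z / 2 + w / 2) (τ / 2) := by
    funext n
    rw [jacobiTheta₂_term, ← Complex.exp_add, ← Complex.exp_add]
    congr 1
    ring
  rw [h]
  exact (summable_jacobiTheta₂_term_iff _ _).2 him

theorem theta_doubling (τ : ℂ) (hτ : 0 < τ.im) (z : ℂ) :
    theta 0 0 (τ / 2) (z / 2) = theta 0 0 (2 * τ) z + theta 1 0 (2 * τ) z ∧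
    theta 0 1 (τ / 2) (z / 2) = theta 0 0 (2 * τ) z - theta 1 0 (2 * τ) z := by
  constructor
  · -- even/odd split of θ₀₀(τ/2, z/2)
    have hsplit := tsum_int_even_add_odd' (summable_theta_term' τ z 0 hτ)
    have hL : theta 0 0 (τ / 2) (z / 2)
        = ∑' n : ℤ, Complex.exp (Real.pi * Complex.I * n * (0 : ℂ)) *
          Complex.exp (Real.pi * Complex.I * (τ / 2) * (n : ℂ) ^ 2) *
          Complex.exp (2 * Real.pi * Complex.I * (z / 2) * n) := by
      simp only [theta]
      refine tsum_congr fun n => ?_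
      simp only [← Complex.exp_add]
      rw [Complex.exp_eq_exp_iff_exists_int]
      exact ⟨0, by push_cast; ring⟩
    have hEq : (∑' m : ℤ, Complex.exp (Real.pi * Complex.I * ((2 * m : ℤ) : ℂ) * (0 : ℂ)) *
          Complex.exp (Real.pi * Complex.I * (τ / 2) * ((2 * m : ℤ) : ℂ) ^ 2) *
          Complex.exp (2 * Real.pi * Complex.I * (z / 2) * ((2 * m : ℤ) : ℂ)))
        = theta 0 0 (2 * τ) z := by
      simp only [theta]
      refine tsum_congr fun m => ?_
      simp only [← Complex.exp_add]
      rw [Complex.exp_eq_exp_iff_exists_int]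
      exact ⟨0, by push_cast; ring⟩
    have hOq : (∑' m : ℤ, Complex.exp (Real.pi * Complex.I * ((2 * m + 1 : ℤ) : ℂ) * (0 : ℂ)) *
          Complex.exp (Real.pi * Complex.I * (τ / 2) * ((2 * m + 1 : ℤ) : ℂ) ^ 2) *
          Complex.exp (2 * Real.pi * Complex.I * (z / 2) * ((2 * m + 1 : ℤ) : ℂ)))
        = theta 1 0 (2 * τ) z := by
      simp only [theta]
      refine tsum_congr fun m => ?_
      simp only [← Complex.exp_add]
      rw [Complex.exp_eq_exp_iff_exists_int]
      exact ⟨0, by push_cast; ring⟩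
    rw [hL, hsplit, hEq, hOq]
  · -- even/odd split of θ₀₁(τ/2, z/2)
    have hsplit := tsum_int_even_add_odd' (summable_theta_term' τ z 1 hτ)
    have hL : theta 0 1 (τ / 2) (z / 2)
        = ∑' n : ℤ, Complex.exp (Real.pi * Complex.I * n * (1 : ℂ)) *
          Complex.exp (Real.pi * Complex.I * (τ / 2) * (n : ℂ) ^ 2) *
          Complex.exp (2 * Real.pi * Complex.I * (z / 2) * n) := by
      simp only [theta]
      refine tsum_congr fun n => ?_
      simp only [← Complex.exp_add]
      rw [Complex.exp_eq_exp_iff_exists_int]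
      exact ⟨0, by push_cast; ring⟩
    have hEq : (∑' m : ℤ, Complex.exp (Real.pi * Complex.I * ((2 * m : ℤ) : ℂ) * (1 : ℂ)) *
          Complex.exp (Real.pi * Complex.I * (τ / 2) * ((2 * m : ℤ) : ℂ) ^ 2) *
          Complex.exp (2 * Real.pi * Complex.I * (z / 2) * ((2 * m : ℤ) : ℂ)))
        = theta 0 0 (2 * τ) z := by
      simp only [theta]
      refine tsum_congr fun m => ?_
      simp only [← Complex.exp_add]
      rw [Complex.exp_eq_exp_iff_exists_int]
      exact ⟨m, by push_cast; ring⟩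
    have hOq : (∑' m : ℤ, Complex.exp (Real.pi * Complex.I * ((2 * m + 1 : ℤ) : ℂ) * (1 : ℂ)) *
          Complex.exp (Real.pi * Complex.I * (τ / 2) * ((2 * m + 1 : ℤ) : ℂ) ^ 2) *
          Complex.exp (2 * Real.pi * Complex.I * (z / 2) * ((2 * m + 1 : ℤ) : ℂ)))
        = - theta 1 0 (2 * τ) z := by
      simp only [theta]
      rw [← tsum_neg]
      refine tsum_congr fun m => ?_
      rw [show -(Complex.exp (Real.pi * Complex.I * (m : ℂ) * ((0 : ℚ) : ℂ)) *
            Complex.exp (Real.pi * Complex.I * (2 * τ) * ((m : ℂ) + ((1 : ℚ) : ℂ) / 2) ^ 2) *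
            Complex.exp (2 * Real.pi * Complex.I * z * ((m : ℂ) + ((1 : ℚ) : ℂ) / 2)))
          = Complex.exp (Real.pi * Complex.I) *
            (Complex.exp (Real.pi * Complex.I * (m : ℂ) * ((0 : ℚ) : ℂ)) *
            Complex.exp (Real.pi * Complex.I * (2 * τ) * ((m : ℂ) + ((1 : ℚ) : ℂ) / 2) ^ 2) *
            Complex.exp (2 * Real.pi * Complex.I * z * ((m : ℂ) + ((1 : ℚ) : ℂ) / 2)))
          by rw [Complex.exp_pi_mul_I]; ring]
      simp only [← Complex.exp_add]
      rw [Complex.exp_eq_exp_iff_exists_int]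
      exact ⟨m, by push_cast; ring⟩
    rw [hL, hsplit, hEq, hOq, ← sub_eq_add_neg]
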